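/- arXiv:2111.07006 — 2 statements merged into one kernel-verified Lean document; each statement's English description precedes it below -/
import Mathlib

section
/- If A is a totally unimodular m×n integer matrix and b is an integral vector in Z^m, then every extreme point of the polyhedron P = {x in R^n : Ax = b, x ≥ 0} (when nonempty) is integral. -/
open Matrix

/-!
At an extreme point `x` of `{x | A x = b, x ≥ 0}` no nonzero `c ∈ ker A` is supported inside the
support `S` of `x`, since otherwise `x ± ε c` would both lie in the polyhedron for small `ε > 0`.
So the columns of `A` indexed by `S` are linearly independent, and some rows `r` make the
square submatrix `B = A[r, S]` invertible. Total unimodularity forces `det B = ±1`, so `B⁻¹` is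
integral and so is `x|_S = B⁻¹ (b ∘ r)`.
-/

lemma Matrix.mulVec_eq_submatrix_mulVec {m ι R : Type*} [Fintype ι]
    [NonUnitalNonAssocSemiring R] (M : Matrix m ι R) {p : ι → Prop} [DecidablePred p]
    {x : ι → R} (hx : ∀ j, ¬ p j → x j = 0) :
    M *ᵥ x = M.submatrix id (Subtype.val : Subtype p → ι) *ᵥ fun j => x j := by
  funext i
  simp only [mulVec, dotProduct, submatrix_apply, id]
  rw [← Finset.sum_filter_of_ne (p := p) fun j _ hj =>
    not_imp_comm.1 (hx j) (right_ne_zero_of_mul hj)]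
  exact Finset.sum_subtype _ (by simp) _

lemma Matrix.exists_submatrix_det_ne_zero_of_linearIndependent_col {m ι K : Type*} [Field K]
    [Finite m] [Fintype ι] [DecidableEq ι] {M : Matrix m ι K} (h : LinearIndependent K M.col) :
    ∃ r : ι → m, (M.submatrix r id).det ≠ 0 := by
  have hspan : Submodule.span K (Set.range M.row) = ⊤ := by
    apply Submodule.eq_top_of_finrank_eq
    rw [← rank_eq_finrank_span_row, rank_eq_finrank_span_cols, finrank_span_eq_card h,
      Module.finrank_fintype_fun_eq_card]
  obtain ⟨κ, a, -, hsp, hli⟩ := exists_linearIndependent' K M.row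
  let e := (Module.Basis.mk hli (by rw [hsp, hspan])).indexEquiv (Pi.basisFun K ι)
  refine ⟨a ∘ e.symm, ?_⟩
  rw [← isUnit_iff_ne_zero, ← isUnit_iff_isUnit_det, ← linearIndependent_rows_iff_isUnit]
  exact hli.comp e.symm e.symm.injective

lemma Matrix.eq_map_mulVec_of_map_mulVec_eq {ι R S : Type*} [Fintype ι] [DecidableEq ι]
    [CommRing R] [CommRing S] (f : R →+* S) {B : Matrix ι ι R} (hB : IsUnit B.det) {b : ι → R}
    {y : ι → S} (h : B.map f *ᵥ y = f ∘ b) : y = f ∘ (B⁻¹ *ᵥ b) := by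
  have hinv : B⁻¹.map f * B.map f = 1 := by
    rw [← RingHom.mapMatrix_apply, ← RingHom.mapMatrix_apply, ← map_mul, nonsing_inv_mul _ hB,
      map_one]
  calc y = (B⁻¹.map f * B.map f) *ᵥ y := by rw [hinv, one_mulVec]
    _ = B⁻¹.map f *ᵥ (f ∘ b) := by rw [← mulVec_mulVec, h]
    _ = f ∘ (B⁻¹ *ᵥ b) := funext fun i => (RingHom.map_mulVec f B⁻¹ b i).symm

lemma Matrix.IsTotallyUnimodular.isUnit_det_submatrix {m n ι R : Type*} [CommRing R]
    [Fintype ι] [DecidableEq ι] {A : Matrix m n R} (hA : A.IsTotallyUnimodular) (f : ι → m)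
    (g : ι → n) (h : (A.submatrix f g).det ≠ 0) : IsUnit (A.submatrix f g).det := by
  obtain ⟨s, hs⟩ := (isTotallyUnimodular_iff_fintype A).1 hA ι f g
  rw [← hs] at h ⊢
  cases s
  · exact absurd rfl h
  · simp
  · simp

section StandardPolyhedron

variable {𝕜 : Type*} [Field 𝕜] [LinearOrder 𝕜] [IsStrictOrderedRing 𝕜]

lemma exists_pos_forall_mul_abs_le {ι : Type*} [Finite ι] {x c : ι → 𝕜}
    (hx : ∀ j, 0 ≤ x j) (hc : ∀ j, x j = 0 → c j = 0) : ∃ ε > 0, ∀ j, ε * |c j| ≤ x j := by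
  have hpos (j : ι) : ∃ ε : Set.Ioi (0 : 𝕜), ε * |c j| ≤ x j := by
    by_cases hxj : x j = 0
    · exact ⟨⟨1, one_pos⟩, by simp [hc j hxj, hx j]⟩
    · obtain ⟨ε, hε, hlt⟩ := exists_pos_mul_lt ((hx j).lt_of_ne' hxj) |c j|
      exact ⟨⟨ε, hε⟩, by rw [mul_comm]; exact hlt.le⟩
  choose ε hε using hpos
  obtain ⟨δ, hδ⟩ := Finite.exists_ge ε
  refine ⟨δ, δ.2, fun j => le_trans ?_ (hε j)⟩
  exact mul_le_mul_of_nonneg_right (hδ j) (abs_nonneg _)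

lemma eq_zero_of_add_mem_of_sub_mem_of_mem_extremePoints {E : Type*} [AddCommGroup E]
    [Module 𝕜 E] {s : Set E} {x v : E} (hx : x ∈ s.extremePoints 𝕜) (hadd : x + v ∈ s)
    (hsub : x - v ∈ s) : v = 0 := by
  have := (mem_extremePoints.1 hx).2 _ hsub _ hadd (mem_openSegment_sub_add x v)
  simpa using this.1

variable {m ι : Type*} [Fintype ι] {A : Matrix m ι 𝕜} {b : m → 𝕜} {x : ι → 𝕜}

def Matrix.standardPolyhedron (A : Matrix m ι 𝕜) (b : m → 𝕜) : Set (ι → 𝕜) :=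
  {x | A *ᵥ x = b ∧ ∀ j, 0 ≤ x j}

lemma eq_zero_of_mem_extremePoints_standardPolyhedron {c : ι → 𝕜}
    (hx : x ∈ (A.standardPolyhedron b).extremePoints 𝕜) (hc : A *ᵥ c = 0)
    (hsupp : ∀ j, x j = 0 → c j = 0) : c = 0 := by
  obtain ⟨hAx, hx0⟩ := hx.1
  obtain ⟨ε, hε, hεc⟩ := exists_pos_forall_mul_abs_le hx0 hsupp
  have hmem (t : 𝕜) (ht : |t| = ε) : x + t • c ∈ A.standardPolyhedron b := by
    refine ⟨by rw [mulVec_add, mulVec_smul, hc, smul_zero, add_zero, hAx], fun j => ?_⟩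
    have := hεc j
    rw [← ht, ← abs_mul] at this
    simp only [Pi.add_apply, Pi.smul_apply, smul_eq_mul]
    linarith [neg_abs_le (t * c j)]
  have := eq_zero_of_add_mem_of_sub_mem_of_mem_extremePoints hx (hmem ε (abs_of_pos hε))
    (by simpa [sub_eq_add_neg] using hmem (-ε) (by simp [abs_of_pos hε]))
  exact (smul_eq_zero.1 this).resolve_left hε.ne'

lemma linearIndependent_col_support_of_mem_extremePoints_standardPolyhedron
    (hx : x ∈ (A.standardPolyhedron b).extremePoints 𝕜) :
    LinearIndependent 𝕜 (A.submatrix id (Subtype.val : {j // x j ≠ 0} → ι)).col := by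
  classical
  rw [← mulVec_injective_iff, ← coe_mulVecLin, ← LinearMap.ker_eq_bot, ker_mulVecLin_eq_bot_iff]
  intro g hg
  set c : ι → 𝕜 := Function.extend Subtype.val g 0
  have hcg (j : {j // x j ≠ 0}) : c j = g j := Subtype.val_injective.extend_apply g 0 j
  have hsupp (j : ι) (hj : x j = 0) : c j = 0 :=
    Function.extend_apply' _ _ _ fun ⟨k, hk⟩ => k.2 (hk ▸ hj)
  have hc : c = 0 := by
    refine eq_zero_of_mem_extremePoints_standardPolyhedron hx ?_ hsupp
    rw [A.mulVec_eq_submatrix_mulVec fun j hj => hsupp j (not_not.1 hj)]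
    simpa only [hcg] using hg
  funext j
  rw [← hcg j, hc, Pi.zero_apply, Pi.zero_apply]

end StandardPolyhedron

/-- If `A` is a totally unimodular `m × n` integer matrix and `b` is an integral vector,
then every extreme point of the polyhedron `P = {x : ℝⁿ | Ax = b, x ≥ 0}` is integral. -/
theorem tu_polyhedron_integral_extreme_points
    (m n : ℕ) (A : Matrix (Fin m) (Fin n) ℤ) (b : Fin m → ℤ)
    (hA : A.IsTotallyUnimodular)
    (P : Set (Fin n → ℝ))
    (hP : P = {x : Fin n → ℝ |
      (A.map (Int.cast : ℤ → ℝ)) *ᵥ x = (fun i => (b i : ℝ)) ∧ ∀ j, 0 ≤ x j}) :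
    ∀ x ∈ Set.extremePoints ℝ P, ∀ j, ∃ z : ℤ, x j = (z : ℝ) := by
  classical
  subst hP
  intro x hx j
  change x ∈ ((A.map (Int.cast : ℤ → ℝ)).standardPolyhedron fun i => (b i : ℝ)).extremePoints ℝ
    at hx
  by_cases hxj : x j = 0
  · exact ⟨0, by simp [hxj]⟩
  obtain ⟨r, hr⟩ := exists_submatrix_det_ne_zero_of_linearIndependent_col
    (linearIndependent_col_support_of_mem_extremePoints_standardPolyhedron hx)
  set B := A.submatrix r (Subtype.val : {j // x j ≠ 0} → Fin n)
  have hB : IsUnit B.det := by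
    refine hA.isUnit_det_submatrix _ _ fun h => hr ?_
    have := RingHom.map_det (Int.castRingHom ℝ) B
    rw [h, map_zero] at this
    exact this.symm
  have hsys : B.map (Int.castRingHom ℝ) *ᵥ (fun k => x k) = Int.castRingHom ℝ ∘ (b ∘ r) := by
    funext p
    have := congrFun hx.1.1 (r p)
    rwa [mulVec_eq_submatrix_mulVec _ fun j hj => not_not.1 hj] at this
  exact ⟨_, congrFun (eq_map_mulVec_of_map_mulVec_eq _ hB hsys) ⟨j, hxj⟩⟩
end

section
/- An m×n matrix with entries in {0,1,-1} is totally unimodular if for every subset C of columns there exists a partition (C1, C2) of C such that for every row i, |sum over j in C1 of a_ij − sum over j in C2 of a_ij| ≤ 1. -/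
/-!
Camion's parity argument, by induction on the size of a square submatrix `B` with `det B ≠ 0`.
By induction the adjugate column `b = adj(B) e₀` has entries in `{0, ±1}`, and `B b = det B • e₀`.
A signing `y` of the support of `b` with `|B y| ≤ 1` satisfies `y ≡ b (mod 2)`, so `B y ≡ B b`
vanishes mod 2 off row `0` and hence `B y = ε • e₀` with `|ε| ≤ 1`. Then `det B • y = ε • b`, and
reading this at an entry where `b ≠ 0` gives `|det B| ≤ |ε| ≤ 1`.
-/

open Finset

theorem Int.even_sub_of_abs_le_one {a b : ℤ} (ha : |a| ≤ 1) (hb : |b| ≤ 1)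
    (hab : a = 0 ↔ b = 0) : Even (a - b) := by
  rw [abs_le] at ha hb
  rw [Int.even_iff]
  by_cases a = 0 <;> simp_all
  omega

namespace Matrix

variable {m n : Type*} [Fintype n]

/-- `x` encodes a partition `C = C₁ ∪ C₂` as `x = 1` on `C₁`, `x = -1` on `C₂` and `x = 0` off `C`. -/
def HasEquitableBicolorings (A : Matrix m n ℤ) : Prop :=
  ∀ C : Finset n, ∃ x : n → ℤ, (∀ j, x j ≠ 0 ↔ j ∈ C) ∧ (∀ j, |x j| ≤ 1) ∧ ∀ i, |(A *ᵥ x) i| ≤ 1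

theorem hasEquitableBicolorings_of_partition [DecidableEq n] {A : Matrix m n ℤ}
    (hA : ∀ C : Finset n, ∃ C₁ C₂ : Finset n, C₁ ∪ C₂ = C ∧ Disjoint C₁ C₂ ∧
      ∀ i, |(∑ j ∈ C₁, A i j) - ∑ j ∈ C₂, A i j| ≤ 1) :
    A.HasEquitableBicolorings := by
  intro C
  obtain ⟨C₁, C₂, rfl, hdisj, hrows⟩ := hA C
  refine ⟨fun j => (if j ∈ C₁ then 1 else 0) - (if j ∈ C₂ then 1 else 0), fun j => ?_,
    fun j => ?_, fun i => ?_⟩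
  · have := @disjoint_left.1 hdisj j
    by_cases j ∈ C₁ <;> by_cases j ∈ C₂ <;> simp_all
  · dsimp only
    split_ifs <;> simp
  · convert hrows i using 2
    simp [mulVec, dotProduct, mul_sub, sum_sub_distrib]

theorem HasEquitableBicolorings.submatrix {m' n' : Type*} [Fintype n'] {A : Matrix m n ℤ}
    (hA : A.HasEquitableBicolorings) (f : m' → m) {g : n' → n} (hg : g.Injective) :
    (A.submatrix f g).HasEquitableBicolorings := by
  classical
  intro C
  obtain ⟨x, hsupp, hx, hAx⟩ := hA (C.map ⟨g, hg⟩)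
  refine ⟨x ∘ g, fun j => by simpa [hg.eq_iff] using hsupp (g j), fun j => hx (g j), fun i => ?_⟩
  convert hAx (f i) using 2
  refine Fintype.sum_of_injective g hg _ _ (fun j hj => ?_) fun _ => rfl
  have : x j = 0 := by
    by_contra hne
    obtain ⟨l, -, rfl⟩ := mem_map.1 ((hsupp j).1 hne)
    exact hj ⟨l, rfl⟩
  simp [this]

theorem mulVec_adjugate_col {R ι : Type*} [CommRing R] [Fintype ι] [DecidableEq ι]
    (B : Matrix ι ι R) (j : ι) : B *ᵥ (fun l => B.adjugate l j) = Pi.single j B.det := by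
  ext i
  simpa [mul_apply, mulVec, dotProduct, one_apply, Pi.single_apply, eq_comm] using
    congrFun (congrFun B.mul_adjugate i) j

theorem mulVec_eq_single_of_even_sub {m ι : Type*} [Fintype ι] [DecidableEq m]
    {B : Matrix m ι ℤ} {b y : ι → ℤ} {i₀ : m} {d : ℤ}
    (hb : B *ᵥ b = Pi.single i₀ d) (hyb : ∀ l, Even (y l - b l)) (hy : ∀ i, |(B *ᵥ y) i| ≤ 1) :
    B *ᵥ y = Pi.single i₀ ((B *ᵥ y) i₀) := by
  ext i
  by_cases hi : i = i₀
  · subst hi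
    simp
  have heven : Even ((B *ᵥ y) i) := by
    have : Even ((B *ᵥ (y - b)) i) := even_sum _ fun l _ => (hyb l).mul_left _
    simpa [mulVec_sub, hb, hi] using this
  obtain ⟨r, hr⟩ := heven
  have := abs_le.1 (hy i)
  rw [Pi.single_eq_of_ne hi]
  omega

theorem det_smul_eq_smul_of_mulVec_eq_single {R ι : Type*} [CommRing R] [IsDomain R] [Fintype ι]
    [DecidableEq ι] {B : Matrix ι ι R} {b y : ι → R} {i₀ : ι} {ε : R} (hdet : B.det ≠ 0)
    (hb : B *ᵥ b = Pi.single i₀ B.det) (hy : B *ᵥ y = Pi.single i₀ ε) : B.det • y = ε • b := by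
  by_contra hne
  refine hdet (exists_mulVec_eq_zero_iff.1 ⟨B.det • y - ε • b, sub_ne_zero.2 hne, ?_⟩)
  rw [mulVec_sub, mulVec_smul, mulVec_smul, hb, hy, ← Pi.single_smul, ← Pi.single_smul,
    smul_eq_mul, smul_eq_mul, mul_comm, sub_self]

theorem HasEquitableBicolorings.abs_det_le_one_of_abs_adjugate_le_one {ι : Type*} [Fintype ι]
    [DecidableEq ι] {B : Matrix ι ι ℤ} (hB : B.HasEquitableBicolorings) (i₀ : ι)
    (hadj : ∀ l, |B.adjugate l i₀| ≤ 1) : |B.det| ≤ 1 := by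
  by_cases hdet : B.det = 0
  · simp [hdet]
  set b := fun l => B.adjugate l i₀
  have hb : B *ᵥ b = Pi.single i₀ B.det := B.mulVec_adjugate_col i₀
  obtain ⟨y, hsupp, hy, hBy⟩ := hB {l | b l ≠ 0}
  have hyb : ∀ l, Even (y l - b l) := fun l =>
    Int.even_sub_of_abs_le_one (hy l) (hadj l) (by simpa using (hsupp l).not)
  have hsmul := det_smul_eq_smul_of_mulVec_eq_single hdet hb
    (mulVec_eq_single_of_even_sub hb hyb hBy)
  obtain ⟨l, hl⟩ : ∃ l, b l ≠ 0 := by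
    by_contra! h
    rw [show b = 0 from funext h, mulVec_zero] at hb
    exact hdet (by simpa using (congrFun hb i₀).symm)
  have hyl : y l ≠ 0 := (hsupp l).2 (by simpa using hl)
  calc |B.det| ≤ |B.det| * |y l| := le_mul_of_one_le_right (abs_nonneg _) (Int.one_le_abs hyl)
    _ = |(B *ᵥ y) i₀| * |b l| := by simpa [abs_mul] using congrArg abs (congrFun hsmul l)
    _ ≤ 1 * 1 := mul_le_mul (hBy i₀) (hadj l) (abs_nonneg _) zero_le_one
    _ = 1 := mul_one 1

theorem HasEquitableBicolorings.abs_det_le_one {k : ℕ} {B : Matrix (Fin k) (Fin k) ℤ}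
    (hB : B.HasEquitableBicolorings) : |B.det| ≤ 1 := by
  induction k with
  | zero => simp
  | succ k ih =>
    refine hB.abs_det_le_one_of_abs_adjugate_le_one 0 fun l => ?_
    rw [adjugate_fin_succ_eq_det_submatrix, abs_mul, abs_pow, abs_neg, abs_one, one_pow, one_mul]
    exact ih (hB.submatrix _ Fin.succAbove_right_injective)

end Matrix

open Finset in
theorem ghouila_houri_column_condition_implies_tu_general
    (m n : ℕ) (A : Matrix (Fin m) (Fin n) ℤ)
    (hpart : ∀ C : Finset (Fin n), ∃ C₁ C₂ : Finset (Fin n),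
      C₁ ∪ C₂ = C ∧ Disjoint C₁ C₂ ∧
      ∀ i : Fin m, |(∑ j ∈ C₁, A i j) - ∑ j ∈ C₂, A i j| ≤ 1) :
    A.IsTotallyUnimodular := by
  have hA := Matrix.hasEquitableBicolorings_of_partition hpart
  intro k f g _ hg
  rw [SignType.range_eq]
  simpa [or_comm, or_left_comm] using Int.abs_le_one_iff.1 (hA.submatrix f hg).abs_det_le_one

open Finset in
/-- Ghouila-Houri (one direction): an `m × n` matrix with entries in `{0, 1, -1}` is totally
unimodular if every subset `C` of columns can be partitioned into `(C₁, C₂)` such that for every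
row `i`, `|∑_{j ∈ C₁} a_{ij} - ∑_{j ∈ C₂} a_{ij}| ≤ 1`. -/
theorem ghouila_houri_column_condition_implies_tu
    (m n : ℕ) (A : Matrix (Fin m) (Fin n) ℤ)
    (hentries : ∀ i j, A i j = 0 ∨ A i j = 1 ∨ A i j = -1)
    (hpart : ∀ C : Finset (Fin n), ∃ C₁ C₂ : Finset (Fin n),
      C₁ ∪ C₂ = C ∧ Disjoint C₁ C₂ ∧
      ∀ i : Fin m, |(∑ j ∈ C₁, A i j) - ∑ j ∈ C₂, A i j| ≤ 1) :
    A.IsTotallyUnimodular :=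
  ghouila_houri_column_condition_implies_tu_general m n A hpart
end
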